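/- Bounded insertion is reversible: if P is a notched tableau semistandard on b, a < b a positive integer, and P' = P ←_b a is the result of bounded insertion, then from P', b, and the location of the new box, one can uniquely recover P and a. In particular, for fixed b and fixed new-box location, the map (P, a) ↦ P ←_b a is injective. -/
import Mathlib


def RowStrictT (P : List (List ℕ)) : Prop :=
  ∀ r ∈ P, List.Chain' (· < ·) r

def PosEntries (P : List (List ℕ)) : Prop := ∀ r ∈ P, ∀ x ∈ r, 0 < x

def IsSSYT (T : List (List ℕ)) : Prop :=
  (∀ r ∈ T, List.Chain' (· < ·) r) ∧
  (∀ i, (T.getD (i + 1) []).length ≤ (T.getD i []).length) ∧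
  (∀ i j, j < (T.getD (i + 1) []).length →
    (T.getD i []).getD j 0 ≤ (T.getD (i + 1) []).getD j 0)

def below (P : List (List ℕ)) (b : ℕ) : List (List ℕ) :=
  P.map (List.filter (fun x => decide (x < b)))

def SemistandardOn (P : List (List ℕ)) (b : ℕ) : Prop := IsSSYT (below P b)

/-- Schensted insertion, with bumping route recorded as a list of column
indices, one for each row of the route; the new box is in row
`route.length - 1`, column `route.getLast`. -/
def ins : List (List ℕ) → ℕ → List (List ℕ) × List ℕ
  | [], a => ([[a]], [0])
  | r :: rs, a =>
    match r.findIdx? (fun x => decide (a ≤ x)) with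
    | none => ((r ++ [a]) :: rs, [r.length])
    | some j =>
      let p := ins rs (r.getD j 0)
      ((r.set j a) :: p.1, j :: p.2)

/-- Bounded insertion `P ←_b a`: Schensted-insert `a` into `P^{<b}` and then
put the removed entries (those `≥ b`) back into their original rows.  The
second component is the bumping route of the Schensted insertion step. -/
def bins (P : List (List ℕ)) (b a : ℕ) : List (List ℕ) × List ℕ :=
  let T := ins (below P b) a
  ((List.range T.1.length).map
      (fun i => T.1.getD i [] ++ (P.getD i []).filter (fun x => decide (b ≤ x))),
    T.2)

lemma ins_route_pos (T : List (List ℕ)) (a : ℕ) : 0 < (ins T a).2.length := by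
  match T with
  | [] => simp [ins]
  | r :: rs =>
    cases h : r.findIdx? (fun x => decide (a ≤ x)) <;> simp [ins, h]

lemma ins_len (T : List (List ℕ)) (a : ℕ) :
    (ins T a).1.length = max T.length (ins T a).2.length := by
  induction T generalizing a with
  | nil => simp [ins]
  | cons r rs ih =>
    cases h : r.findIdx? (fun x => decide (a ≤ x)) with
    | none => simp [ins, h]
    | some j =>
      simp only [ins, h, List.length_cons]
      have := ih (r.getD j 0)
      omega

lemma ins_route_le (T : List (List ℕ)) (a : ℕ) :
    (ins T a).2.length ≤ T.length + 1 := by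
  induction T generalizing a with
  | nil => simp [ins]
  | cons r rs ih =>
    cases h : r.findIdx? (fun x => decide (a ≤ x)) with
    | none => simp [ins, h]
    | some j =>
      simp only [ins, h, List.length_cons]
      have := ih (r.getD j 0)
      omega

lemma ins_last (T : List (List ℕ)) (a : ℕ) :
    (ins T a).2.getLast? = some ((T.getD ((ins T a).2.length - 1) []).length) := by
  induction T generalizing a with
  | nil => simp [ins]
  | cons r rs ih =>
    cases h : r.findIdx? (fun x => decide (a ≤ x)) with
    | none => simp [ins, h]
    | some j =>
      simp only [ins, h, List.length_cons]
      have h1 : 0 < (ins rs (r.getD j 0)).2.length := ins_route_pos _ _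
      obtain ⟨m, hm⟩ : ∃ m, (ins rs (r.getD j 0)).2.length = m + 1 :=
        ⟨_, (Nat.succ_pred_eq_of_pos h1).symm⟩
      rw [List.getLast?_cons, ih (r.getD j 0), hm]
      simp

lemma ins_all {p : ℕ → Prop} (T : List (List ℕ)) (a : ℕ)
    (hT : ∀ r ∈ T, ∀ y ∈ r, p y) (ha : p a) :
    ∀ r ∈ (ins T a).1, ∀ y ∈ r, p y := by
  induction T generalizing a with
  | nil => simpa [ins] using ha
  | cons r rs ih =>
    cases h : r.findIdx? (fun x => decide (a ≤ x)) with
    | none =>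
      simp only [ins, h]
      intro s hs y hy
      rcases List.mem_cons.mp hs with rfl | hs
      · rcases List.mem_append.mp hy with hy | hy
        · exact hT r (by simp) y hy
        · simp at hy; subst hy; exact ha
      · exact hT s (by simp [hs]) y hy
    | some j =>
      obtain ⟨hj, hpj, hlt⟩ := List.findIdx?_eq_some_iff_getElem.mp h
      simp only [ins, h]
      intro s hs y hy
      rcases List.mem_cons.mp hs with rfl | hs
      · rcases List.mem_or_eq_of_mem_set hy with hy | rfl
        · exact hT r (by simp) y hy
        · exact ha
      · refine ih (r.getD j 0) (fun s' hs' y' hy' => hT s' (by simp [hs']) y' hy') ?_ s hs y hy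
        rw [List.getD_eq_getElem _ _ hj]
        exact hT r (by simp) _ (List.getElem_mem hj)

lemma ins_inj : ∀ (T T' : List (List ℕ)) (a a' : ℕ),
    (∀ r ∈ T, List.Chain' (· < ·) r) → (∀ r ∈ T', List.Chain' (· < ·) r) →
    T.length = T'.length →
    (ins T a).1 = (ins T' a').1 →
    (ins T a).2.length = (ins T' a').2.length →
    T = T' ∧ a = a'
  | [], [], a, a', _, _, _, h1, _ => by
    simp [ins] at h1; exact ⟨rfl, h1⟩
  | [], r' :: rs', _, _, _, _, hlen, _, _ => by simp at hlen
  | r :: rs, [], _, _, _, _, hlen, _, _ => by simp at hlen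
  | r :: rs, r' :: rs', a, a', hT, hT', hlen, h1, h2 => by
    cases h : r.findIdx? (fun x => decide (a ≤ x)) with
    | none =>
      cases h' : r'.findIdx? (fun x => decide (a' ≤ x)) with
      | none =>
        simp only [ins, h, h', List.cons.injEq] at h1
        obtain ⟨hr, hrs⟩ := h1
        have hl : r.length = r'.length := by
          have := congrArg List.length hr; simp at this; omega
        obtain ⟨hr, ha⟩ := List.append_inj' hr (by simp)
        simp at ha
        exact ⟨by rw [hr, hrs], ha⟩
      | some j' =>
        have := ins_route_pos rs' (r'.getD j' 0)
        simp only [ins, h, h', List.length_cons] at h2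
        simp only [List.length_nil] at h2
        omega
    | some j =>
      cases h' : r'.findIdx? (fun x => decide (a' ≤ x)) with
      | none =>
        have := ins_route_pos rs (r.getD j 0)
        simp only [ins, h, h', List.length_cons] at h2
        simp only [List.length_nil] at h2
        omega
      | some j' =>
        obtain ⟨hj, hpj, hltj⟩ := List.findIdx?_eq_some_iff_getElem.mp h
        obtain ⟨hj', hpj', hltj'⟩ := List.findIdx?_eq_some_iff_getElem.mp h'
        simp only [decide_eq_true_eq] at hpj hpj'
        simp only [ins, h, h', List.cons.injEq, List.length_cons] at h1 h2
        set x := r.getD j 0 with hx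
        set x' := r'.getD j' 0 with hx'
        obtain ⟨hrow, htail⟩ := h1
        obtain ⟨hrs, hxx⟩ := ins_inj rs rs' x x'
          (fun s hs => hT s (by simp [hs])) (fun s hs => hT' s (by simp [hs]))
          (by simpa using hlen) htail (by omega)
        have hxg : x = r[j] := List.getD_eq_getElem _ _ hj
        have hxg' : x' = r'[j'] := List.getD_eq_getElem _ _ hj'
        have hPW : List.Pairwise (· < ·) r := List.isChain_iff_pairwise.mp (hT r (by simp))
        have hPW' : List.Pairwise (· < ·) r' := List.isChain_iff_pairwise.mp (hT' r' (by simp))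
        have hrl : r.length = r'.length := by
          have := congrArg List.length hrow; simpa using this
        have hpw : ∀ {k l : ℕ} (hk : k < l) (hl : l < r.length), r[k]'(by omega) < r[l] := by
          intro k l hk hl
          exact List.pairwise_iff_getElem.mp hPW k l (by omega) hl hk
        have hpw' : ∀ {k l : ℕ} (hk : k < l) (hl : l < r'.length), r'[k]'(by omega) < r'[l] := by
          intro k l hk hl
          exact List.pairwise_iff_getElem.mp hPW' k l (by omega) hl hk
        have hjj : j = j' := by
          rcases Nat.lt_trichotomy j j' with hc | hc | hc
          · exfalso
            have e1 : (r.set j a)[j']'(by simpa [hrl] using hj') = r[j']'(by omega) :=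
              List.getElem_set_ne (show j ≠ j' by omega) _
            have e2 : (r'.set j' a')[j']'(by simpa using hj') = a' :=
              List.getElem_set_self (by simpa using hj')
            have e3 := congrArg (fun l => l.getD j' 0) hrow
            simp only [List.getD_eq_getElem _ _ (show j' < (r.set j a).length by simpa [hrl] using hj'),
              List.getD_eq_getElem _ _ (show j' < (r'.set j' a').length by simpa using hj')] at e3
            rw [e1, e2] at e3
            have : x < r[j']'(by omega) := by rw [hxg]; exact hpw hc (by omega)
            have : a' ≤ x := by rw [hxx, hxg']; exact hpj'
            omega
          · exact hc
          · exfalso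
            have e1 : (r'.set j' a')[j]'(by simpa [← hrl] using hj) = r'[j]'(by omega) :=
              List.getElem_set_ne (show j' ≠ j by omega) _
            have e2 : (r.set j a)[j]'(by simpa using hj) = a :=
              List.getElem_set_self (by simpa using hj)
            have e3 := congrArg (fun l => l.getD j 0) hrow
            simp only [List.getD_eq_getElem _ _ (show j < (r.set j a).length by simpa using hj),
              List.getD_eq_getElem _ _ (show j < (r'.set j' a').length by simpa [← hrl] using hj)] at e3
            rw [e1, e2] at e3
            have hlt1 : x' < r'[j]'(by omega) := by rw [hxg']; exact hpw' hc (by omega)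
            have hle1 : a ≤ x := hxg ▸ hpj
            omega
        subst hjj
        have haa : a = a' := by
          have e3 := congrArg (fun l => l.getD j 0) hrow
          simp only [List.getD_eq_getElem _ _ (show j < (r.set j a).length by simpa using hj),
            List.getD_eq_getElem _ _ (show j < (r'.set j a').length by simpa [← hrl] using hj)] at e3
          rwa [List.getElem_set_self (by simpa using hj),
            List.getElem_set_self (by simpa [← hrl] using hj)] at e3
        have hrr : r = r' := by
          apply List.ext_getElem hrl
          intro k hk hk'
          by_cases hkj : k = j
          · subst hkj; rw [← hxg, ← hxg', hxx]
          · have e3 := congrArg (fun l => l.getD k 0) hrow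
            simp only [List.getD_eq_getElem _ _ (show k < (r.set j a).length by simpa using hk),
              List.getD_eq_getElem _ _ (show k < (r'.set j a').length by simpa using hk')] at e3
            rwa [List.getElem_set_ne (show j ≠ k by omega) _,
              List.getElem_set_ne (show j ≠ k by omega) _] at e3
        exact ⟨by rw [hrr, hrs], haa⟩

lemma filter_split {b : ℕ} : ∀ {r : List ℕ}, List.Pairwise (· < ·) r →
    r.filter (fun x => decide (x < b)) ++ r.filter (fun x => decide (b ≤ x)) = r
  | [], _ => by simp
  | x :: t, h => by
    obtain ⟨hx, ht⟩ := List.pairwise_cons.mp h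
    by_cases hb : x < b
    · have h1 : ¬ b ≤ x := by omega
      simp [List.filter_cons, hb, h1, filter_split ht]
    · have h1 : b ≤ x := by omega
      have h2 : t.filter (fun x => decide (x < b)) = [] :=
        List.filter_eq_nil_iff.mpr (fun y hy => by
          have := hx y hy; simp; omega)
      have h3 : t.filter (fun x => decide (b ≤ x)) = t :=
        List.filter_eq_self.mpr (fun y hy => by
          have := hx y hy; simp; omega)
      simp [List.filter_cons, hb, h1, h2, h3]

lemma below_getD (P : List (List ℕ)) (b i : ℕ) (hi : i < P.length) :
    (below P b).getD i [] = (P.getD i []).filter (fun x => decide (x < b)) := by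
  rw [List.getD_eq_getElem _ _ hi,
    List.getD_eq_getElem _ _ (show i < (below P b).length by simpa [below] using hi)]
  simp [below]

lemma below_lt (P : List (List ℕ)) (b : ℕ) : ∀ r ∈ below P b, ∀ y ∈ r, y < b := by
  intro r hr y hy
  simp only [below, List.mem_map] at hr
  obtain ⟨s, _, rfl⟩ := hr
  simpa using List.of_mem_filter hy

lemma ins_below_lt (P : List (List ℕ)) (b a : ℕ) (hab : a < b) :
    ∀ r ∈ (ins (below P b) a).1, ∀ y ∈ r, y < b :=
  ins_all _ _ (below_lt P b) hab

lemma bins_getD (P : List (List ℕ)) (b a i : ℕ) (hi : i < (ins (below P b) a).1.length) :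
    (bins P b a).1.getD i [] =
      (ins (below P b) a).1.getD i [] ++ (P.getD i []).filter (fun x => decide (b ≤ x)) := by
  rw [List.getD_eq_getElem _ _ (show i < (bins P b a).1.length by simpa [bins] using hi)]
  simp [bins]

lemma row_eq_split {b : ℕ} {u v u' v' : List ℕ}
    (hu : ∀ y ∈ u, y < b) (hu' : ∀ y ∈ u', y < b)
    (hv : ∀ y ∈ v, b ≤ y) (hv' : ∀ y ∈ v', b ≤ y)
    (h : u ++ v = u' ++ v') : u = u' ∧ v = v' := by
  have h1 := congrArg (List.filter (fun x => decide (x < b))) h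
  simp only [List.filter_append] at h1
  have e1 : u.filter (fun x => decide (x < b)) = u :=
    List.filter_eq_self.mpr (fun y hy => by simpa using hu y hy)
  have e2 : u'.filter (fun x => decide (x < b)) = u' :=
    List.filter_eq_self.mpr (fun y hy => by simpa using hu' y hy)
  have e3 : v.filter (fun x => decide (x < b)) = [] :=
    List.filter_eq_nil_iff.mpr (fun y hy => by have := hv y hy; simp; omega)
  have e4 : v'.filter (fun x => decide (x < b)) = [] :=
    List.filter_eq_nil_iff.mpr (fun y hy => by have := hv' y hy; simp; omega)
  rw [e1, e2, e3, e4, List.append_nil, List.append_nil] at h1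
  refine ⟨h1, ?_⟩
  rw [h1] at h
  exact List.append_cancel_left h

lemma bins_len_le (b : ℕ) (P P' : List (List ℕ)) (a a' : ℕ)
    (hP' : RowStrictT P') (hP'ne : ∀ r ∈ P', r ≠ [])
    (hab : a < b) (ha'b : a' < b)
    (heq : (bins P b a).1 = (bins P' b a').1)
    (hrow : (bins P b a).2.length = (bins P' b a').2.length)
    (hcol : (bins P b a).2.getLast? = (bins P' b a').2.getLast?) :
    P'.length ≤ P.length := by
  by_contra hlt
  push_neg at hlt
  set T := below P b with hTdef
  set T' := below P' b with hT'def
  have hTlen : T.length = P.length := by simp [hTdef, below]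
  have hT'len : T'.length = P'.length := by simp [hT'def, below]
  have hd : (ins T a).2.length = (ins T' a').2.length := by simpa [bins] using hrow
  have hL : (ins T a).1.length = (ins T' a').1.length := by
    simpa [bins] using congrArg List.length heq
  have hlen1 := ins_len T a
  have hlen2 := ins_len T' a'
  have hle := ins_route_le T a
  have hdn : (ins T a).2.length = P.length + 1 := by omega
  have hn' : P'.length = P.length + 1 := by omega
  set n := P.length with hn
  -- the new box is at row n in both, and row n of T is empty
  have hc : (T.getD ((ins T a).2.length - 1) []).length =
      (T'.getD ((ins T' a').2.length - 1) []).length := by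
    have h2 : (ins T a).2.getLast? = (ins T' a').2.getLast? := by
      simpa [bins] using hcol
    rw [ins_last, ins_last] at h2
    exact Option.some.inj h2
  rw [hdn, ← hd, hdn] at hc
  simp only [Nat.add_sub_cancel] at hc
  have hTn : T.getD n [] = [] := List.getD_eq_default _ _ (by omega)
  rw [hTn] at hc
  have hT'n : T'.getD n [] = [] := List.length_eq_zero_iff.mp (by simpa using hc.symm)
  have hfilt_lt : (P'.getD n []).filter (fun x => decide (x < b)) = [] := by
    rw [← below_getD P' b n (by omega)]; exact hT'n
  -- row n of the bins results
  have hiL : n < (ins T a).1.length := by omega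
  have e := congrArg (fun l => l.getD n []) heq
  rw [bins_getD P b a n hiL, bins_getD P' b a' n (by show n < (ins T' a').1.length; rw [← hL]; omega)] at e
  have hu : ∀ y ∈ (ins T a).1.getD n [], y < b := by
    intro y hy
    rw [List.getD_eq_getElem _ _ hiL] at hy
    exact ins_below_lt P b a hab _ (List.getElem_mem hiL) y hy
  have hu' : ∀ y ∈ (ins T' a').1.getD n [], y < b := by
    intro y hy
    rw [List.getD_eq_getElem _ _ (show n < (ins T' a').1.length by rw [← hL]; omega)] at hy
    exact ins_below_lt P' b a' ha'b _ (List.getElem_mem _) y hy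
  have hv : ∀ y ∈ (P.getD n []).filter (fun x => decide (b ≤ x)), b ≤ y := by
    intro y hy; simpa using List.of_mem_filter hy
  have hv' : ∀ y ∈ (P'.getD n []).filter (fun x => decide (b ≤ x)), b ≤ y := by
    intro y hy; simpa using List.of_mem_filter hy
  obtain ⟨-, hvv⟩ := row_eq_split hu hu' hv hv' e
  have hPn : P.getD n [] = [] := List.getD_eq_default _ _ (by omega)
  rw [hPn] at hvv
  simp only [List.filter_nil] at hvv
  have hfilt_ge : (P'.getD n []).filter (fun x => decide (b ≤ x)) = [] := hvv.symm
  -- hence row n of P' is empty, contradiction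
  have hmem : P'.getD n [] ∈ P' := by
    rw [List.getD_eq_getElem _ _ (show n < P'.length by omega)]
    exact List.getElem_mem _
  have hpw : List.Pairwise (· < ·) (P'.getD n []) :=
    List.isChain_iff_pairwise.mp (hP' _ hmem)
  have := filter_split (b := b) hpw
  rw [hfilt_lt, hfilt_ge] at this
  exact hP'ne _ hmem this.symm

/-- Bounded insertion is reversible: for fixed `b` and fixed new-box location,
`(P, a) ↦ P ←_b a` is injective. -/
theorem bins_injective (b : ℕ) (P P' : List (List ℕ)) (a a' : ℕ)
    (hP : RowStrictT P) (hP' : RowStrictT P')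
    (hPpos : PosEntries P) (hP'pos : PosEntries P')
    (hssb : SemistandardOn P b) (hssb' : SemistandardOn P' b)
    (hPne : ∀ r ∈ P, r ≠ []) (hP'ne : ∀ r ∈ P', r ≠ [])
    (ha0 : 0 < a) (ha'0 : 0 < a') (hab : a < b) (ha'b : a' < b)
    (heq : (bins P b a).1 = (bins P' b a').1)
    (hrow : (bins P b a).2.length = (bins P' b a').2.length)
    (hcol : (bins P b a).2.getLast? = (bins P' b a').2.getLast?) :
    P = P' ∧ a = a' := by
  have hn : P.length = P'.length :=
    le_antisymm
      (bins_len_le b P' P a' a hP hPne ha'b hab heq.symm hrow.symm hcol.symm)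
      (bins_len_le b P P' a a' hP' hP'ne hab ha'b heq hrow hcol)
  set T := below P b with hTdef
  set T' := below P' b with hT'def
  have hTlen : T.length = P.length := by simp [hTdef, below]
  have hT'len : T'.length = P'.length := by simp [hT'def, below]
  have hd : (ins T a).2.length = (ins T' a').2.length := by simpa [bins] using hrow
  have hL : (ins T a).1.length = (ins T' a').1.length := by
    simpa [bins] using congrArg List.length heq
  have hTchain : ∀ r ∈ T, List.Chain' (· < ·) r := by
    intro r hr
    simp only [hTdef, below, List.mem_map] at hr
    obtain ⟨s, hs, rfl⟩ := hr
    exact List.isChain_iff_pairwise.mpr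
      (((List.isChain_iff_pairwise.mp (hP s hs)).filter _))
  have hT'chain : ∀ r ∈ T', List.Chain' (· < ·) r := by
    intro r hr
    simp only [hT'def, below, List.mem_map] at hr
    obtain ⟨s, hs, rfl⟩ := hr
    exact List.isChain_iff_pairwise.mpr
      (((List.isChain_iff_pairwise.mp (hP' s hs)).filter _))
  -- per-row equality of the insertion results and of the parts ≥ b
  have hrows : ∀ i, i < (ins T a).1.length →
      (ins T a).1.getD i [] = (ins T' a').1.getD i [] ∧
      (P.getD i []).filter (fun x => decide (b ≤ x)) =
        (P'.getD i []).filter (fun x => decide (b ≤ x)) := by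
    intro i hi
    have e := congrArg (fun l => l.getD i []) heq
    rw [bins_getD P b a i hi,
      bins_getD P' b a' i (by show i < (ins T' a').1.length; rw [← hL]; exact hi)] at e
    have hu : ∀ y ∈ (ins T a).1.getD i [], y < b := by
      intro y hy
      rw [List.getD_eq_getElem _ _ hi] at hy
      exact ins_below_lt P b a hab _ (List.getElem_mem hi) y hy
    have hu' : ∀ y ∈ (ins T' a').1.getD i [], y < b := by
      intro y hy
      rw [List.getD_eq_getElem _ _ (show i < (ins T' a').1.length by rw [← hL]; exact hi)] at hy
      exact ins_below_lt P' b a' ha'b _ (List.getElem_mem _) y hy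
    have hv : ∀ y ∈ (P.getD i []).filter (fun x => decide (b ≤ x)), b ≤ y := by
      intro y hy; simpa using List.of_mem_filter hy
    have hv' : ∀ y ∈ (P'.getD i []).filter (fun x => decide (b ≤ x)), b ≤ y := by
      intro y hy; simpa using List.of_mem_filter hy
    exact row_eq_split hu hu' hv hv' e
  have hins1 : (ins T a).1 = (ins T' a').1 := by
    apply List.ext_getElem hL
    intro i h1 h2
    have := (hrows i h1).1
    rwa [List.getD_eq_getElem _ _ h1, List.getD_eq_getElem _ _ h2] at this
  obtain ⟨hTT, haa⟩ := ins_inj T T' a a' hTchain hT'chain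
    (by rw [hTlen, hT'len, hn]) hins1 hd
  refine ⟨?_, haa⟩
  apply List.ext_getElem hn
  intro i h1 h2
  have hpw : List.Pairwise (· < ·) P[i] :=
    List.isChain_iff_pairwise.mp (hP _ (List.getElem_mem h1))
  have hpw' : List.Pairwise (· < ·) P'[i] :=
    List.isChain_iff_pairwise.mp (hP' _ (List.getElem_mem h2))
  have hiL : i < (ins T a).1.length := by
    have := ins_len T a
    omega
  have hflt : (P.getD i []).filter (fun x => decide (x < b)) =
      (P'.getD i []).filter (fun x => decide (x < b)) := by
    rw [← below_getD P b i h1, ← below_getD P' b i h2, ← hTdef, ← hT'def, hTT]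
  have hfge := (hrows i hiL).2
  have e1 := filter_split (b := b) hpw
  have e2 := filter_split (b := b) hpw'
  rw [← e1, ← e2]
  rw [List.getD_eq_getElem _ _ h1, List.getD_eq_getElem _ _ h2] at hflt hfge
  rw [hflt, hfge]
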